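/- Let T be a tree with radius r, diameter d, and eccentric sequence (r^(m_r),(r+1)^(m_{r+1}),...,d^(m_d)), where m_i is the number of vertices of eccentricity i. If m_i > m_{i-1} + m_{i+1} for some r < i ≤ d (setting m_{d+1} = 0), then F(T) ≥ m_i − m_{i−1} − m_{i+1}. -/

import Mathlib

open SimpleGraph

/-- A set `S` of vertices is a fixing set of `G` if the only automorphism of `G`
fixing every vertex of `S` is the identity. -/
def IsFixingSet {V : Type*} (G : SimpleGraph V) (S : Set V) : Prop :=
  ∀ φ : G ≃g G, (∀ v ∈ S, φ v = v) → ∀ v, φ v = v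

/-- The fixing number of a finite graph: the minimum cardinality of a fixing set. -/
noncomputable def fixingNumber {V : Type*} [Fintype V] (G : SimpleGraph V) : ℕ :=
  sInf {n | ∃ S : Finset V, S.card = n ∧ IsFixingSet G ↑S}

/-- A coloring is distinguishing if the only color-preserving automorphism is the identity. -/
def IsDistinguishingColoring {V α : Type*} (G : SimpleGraph V) (c : V → α) : Prop :=
  ∀ φ : G ≃g G, (∀ v, c (φ v) = c v) → ∀ v, φ v = v

/-- `G` is `D`-distinguishable if it has a distinguishing coloring with at most `D` colors. -/
def Distinguishable {V : Type*} (G : SimpleGraph V) (D : ℕ) : Prop :=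
  ∃ c : V → Fin D, IsDistinguishingColoring G c

/-- The distinguishing number of `G`. -/
noncomputable def distinguishingNumber {V : Type*} (G : SimpleGraph V) : ℕ :=
  sInf {D | Distinguishable G D}

/-- Eccentricity of a vertex: the supremum of distances to other vertices. -/
noncomputable def ecc {V : Type*} (G : SimpleGraph V) (v : V) : ℕ :=
  sSup (Set.range (G.dist v))

/-
Write `A j` for the set of vertices of eccentricity `j`. In a tree at most one neighbour `u` of a
vertex `w` has `ecc u ≤ ecc w`: it is the first step from `w` towards a vertex farthest from `w`.
Hence the vertices of `A i` having a neighbour of larger eccentricity inject into `A (i + 1)`, and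
every other vertex of `A i` is a leaf. The neighbour of such a leaf has eccentricity `i - 1`, since
adjacent vertices of equal eccentricity are central and `i` exceeds the radius. Two such leaves with
a common neighbour are swapped by an automorphism, so a fixing set `S` misses at most one of them
per neighbour, and the leaves it misses inject into `A (i - 1)`. Thus
`#(A i) ≤ #S + #(A (i - 1)) + #(A (i + 1))`.
-/

theorem Set.ncard_le_ncard_of_forall_subsingleton {α β : Type*} {s : Set α} {t : Set β}
    (r : α → β → Prop) (hs : ∀ a ∈ s, ∃ b ∈ t, r a b)
    (ht : ∀ b ∈ t, {a ∈ s | r a b}.Subsingleton) (htf : t.Finite) : s.ncard ≤ t.ncard := by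
  obtain hsf | hsf := s.finite_or_infinite
  · lift s to Finset α using hsf
    lift t to Finset β using htf
    simp only [Set.ncard_coe_finset]
    exact Finset.card_le_card_of_forall_subsingleton r hs ht
  · simp [hsf.ncard]

namespace SimpleGraph

variable {V : Type*} {G : SimpleGraph V} {a b u v w x z : V}

theorem Walk.dist_add_dist_le_length (p : G.Walk a b) (hz : z ∈ p.support) :
    G.dist a z + G.dist z b ≤ p.length := by
  classical
  calc G.dist a z + G.dist z b ≤ (p.takeUntil z hz).length + (p.dropUntil z hz).length :=
        add_le_add (dist_le _) (dist_le _)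
    _ = p.length := by rw [← Walk.length_append, Walk.take_spec]

theorem IsTree.length_eq_dist_of_isPath (hT : G.IsTree) {p : G.Walk a b} (hp : p.IsPath) :
    p.length = G.dist a b := by
  obtain ⟨q, hq, hql⟩ := hT.connected.exists_path_of_dist a b
  rw [← hql, Subtype.mk.inj ((hT.isAcyclic.subsingleton_path a b).elim ⟨p, hp⟩ ⟨q, hq⟩)]

theorem IsTree.eq_of_adj_of_dist_le (hT : G.IsTree) {u' : V} (hu : G.Adj w u) (hu' : G.Adj w u')
    (hd : G.dist x u ≤ G.dist x w) (hd' : G.dist x u' ≤ G.dist x w) : u = u' := by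
  obtain ⟨p, hp, -⟩ := hT.connected.exists_path_of_dist x w
  have eq_penultimate : ∀ y, G.Adj w y → G.dist x y ≤ G.dist x w → y = p.penultimate := by
    intro y hy hdy
    obtain ⟨q, hq⟩ := hT.connected.exists_walk_length_eq_dist x y
    have hlen : (q.concat hy.symm).length = G.dist x w := by
      have := hT.dist_eq_dist_add_one_of_adj x hy
      have := hT.dist_ne_of_adj x hy
      rw [Walk.length_concat, hq]
      omega
    have hpq := (hT.isAcyclic.subsingleton_path x w).elim ⟨p, hp⟩
      ⟨_, (q.concat hy.symm).isPath_of_length_eq_dist hlen⟩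
    rw [Subtype.mk.inj hpq, Walk.penultimate_concat]
  rw [eq_penultimate u hu hd, eq_penultimate u' hu' hd']

theorem IsTree.dist_eq_dist_add_one_add_dist (hT : G.IsTree) (huv : G.Adj u v)
    (ha : G.dist a v = G.dist a u + 1) (hb : G.dist u b = G.dist v b + 1) :
    G.dist a b = G.dist a u + 1 + G.dist v b := by
  obtain ⟨p, hp, hpl⟩ := hT.connected.exists_path_of_dist a u
  obtain ⟨q, hq, hql⟩ := hT.connected.exists_path_of_dist v b
  have hpath : (p.append (.cons huv q)).IsPath := by
    rw [Walk.isPath_def, Walk.support_append, Walk.support_cons, List.tail_cons]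
    refine hp.support_nodup.append hq.support_nodup fun z hzp hzq => ?_
    have := p.dist_add_dist_le_length hzp
    have := q.dist_add_dist_le_length hzq
    have := hT.connected.dist_triangle (u := a) (v := z) (w := v)
    have := hT.connected.dist_triangle (u := u) (v := z) (w := b)
    have := G.dist_comm (u := z) (v := v)
    have := G.dist_comm (u := z) (v := u)
    omega
  rw [← hT.length_eq_dist_of_isPath hpath, Walk.length_append, Walk.length_cons, hpl, hql]
  ring

section Eccentricity

variable [Finite V]

theorem dist_le_ecc (v x : V) : G.dist v x ≤ ecc G v :=
  le_csSup (Set.finite_range _).bddAbove ⟨x, rfl⟩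

theorem exists_dist_eq_ecc (v : V) : ∃ x, G.dist v x = ecc G v :=
  Nat.sSup_mem (s := Set.range (G.dist v)) ⟨_, v, rfl⟩ (Set.finite_range _).bddAbove

theorem Connected.ecc_le_ecc_add_one (hG : G.Connected) (h : G.Adj u v) :
    ecc G u ≤ ecc G v + 1 := by
  obtain ⟨x, hx⟩ := exists_dist_eq_ecc (G := G) u
  have := hG.dist_triangle (u := u) (v := v) (w := x)
  have := dist_le_ecc (G := G) v x
  rw [dist_eq_one_iff_adj.2 h] at *
  omega

/-- Vertices farthest from `v` and from `u` lie on opposite sides of the edge `uv`, so they are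
at distance `2 * ecc G v - 1`, which is at most `2 * ecc G c`. -/
theorem IsTree.ecc_le_ecc_of_adj_of_ecc_eq (hT : G.IsTree) (huv : G.Adj u v)
    (he : ecc G u = ecc G v) (c : V) : ecc G v ≤ ecc G c := by
  obtain ⟨a, ha⟩ := exists_dist_eq_ecc (G := G) v
  obtain ⟨b, hb⟩ := exists_dist_eq_ecc (G := G) u
  have hau := dist_le_ecc (G := G) u a
  have hbv := dist_le_ecc (G := G) v b
  rw [dist_comm] at ha hau
  have hav : G.dist a v = G.dist a u + 1 := by
    have := hT.dist_eq_dist_add_one_of_adj a huv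
    omega
  have hbu : G.dist u b = G.dist v b + 1 := by
    have := hT.dist_eq_dist_add_one_of_adj b huv
    rw [G.dist_comm (u := b), G.dist_comm (u := b)] at this
    omega
  have hab := hT.dist_eq_dist_add_one_add_dist huv hav hbu
  have := hT.connected.dist_triangle (u := a) (v := c) (w := b)
  have := dist_le_ecc (G := G) c a
  have := dist_le_ecc (G := G) c b
  rw [G.dist_comm (u := c) (v := a)] at *
  omega

theorem IsTree.subsingleton_setOf_adj_ecc_le (hT : G.IsTree) (w : V) :
    {u | G.Adj w u ∧ ecc G u ≤ ecc G w}.Subsingleton := by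
  obtain ⟨x, hx⟩ := exists_dist_eq_ecc (G := G) w
  have hd : ∀ u, ecc G u ≤ ecc G w → G.dist x u ≤ G.dist x w := fun u hu => by
    rw [dist_comm, G.dist_comm (u := x), hx]
    exact (dist_le_ecc u x).trans hu
  rintro u ⟨hu, hue⟩ u' ⟨hu', hue'⟩
  exact hT.eq_of_adj_of_dist_le hu hu' (hd u hue) (hd u' hue')

def IsEccLocalMax (G : SimpleGraph V) (v : V) : Prop :=
  ∀ u, G.Adj v u → ecc G u ≤ ecc G v

theorem IsTree.neighborSet_eq_singleton_of_isEccLocalMax (hT : G.IsTree)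
    (hv : IsEccLocalMax G v) (hw : G.Adj v w) : G.neighborSet v = {w} :=
  ((hT.subsingleton_setOf_adj_ecc_le v).anti fun u hu => ⟨hu, hv u hu⟩).eq_singleton_of_mem hw

theorem Preconnected.exists_adj_of_ecc_pos (hG : G.Preconnected) (hv : 0 < ecc G v) :
    ∃ w, G.Adj v w := by
  obtain ⟨x, hx⟩ := exists_dist_eq_ecc (G := G) v
  have hvx : v ≠ x := by
    rintro rfl
    rw [dist_self] at hx
    omega
  have : Nontrivial V := ⟨⟨v, x, hvx⟩⟩
  exact exists_adj_iff_not_isIsolated.2 (hG.not_isIsolated v)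

theorem IsTree.ecc_eq_sub_one_of_isEccLocalMax (hT : G.IsTree) (hv : IsEccLocalMax G v)
    (hw : G.Adj v w) (hr : sInf (Set.range (ecc G)) < ecc G v) : ecc G w = ecc G v - 1 := by
  have hne : ecc G w ≠ ecc G v := fun he => by
    have : Nonempty V := ⟨v⟩
    have := le_csInf (Set.range_nonempty (ecc G))
      (Set.forall_mem_range.2 (hT.ecc_le_ecc_of_adj_of_ecc_eq hw.symm he))
    omega
  have := hv w hw
  have := hT.connected.ecc_le_ecc_add_one hw
  omega

end Eccentricity

def swapIso [DecidableEq V] (h : G.neighborSet u = G.neighborSet v) : G ≃g G where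
  toEquiv := Equiv.swap u v
  map_rel_iff' := by
    have hadj : ∀ z, G.Adj u z ↔ G.Adj v z := fun z => Set.ext_iff.1 h z
    intro a b
    simp only [Equiv.swap_apply_def]
    split_ifs <;> grind [G.adj_comm, G.loopless]

end SimpleGraph

theorem IsFixingSet.mem_or_mem_of_neighborSet_eq {V : Type*} {G : SimpleGraph V} {S : Set V}
    {u v : V} (hS : IsFixingSet G S) (hne : u ≠ v) (h : G.neighborSet u = G.neighborSet v) :
    u ∈ S ∨ v ∈ S := by
  classical
  by_contra! huv
  have := hS (swapIso h) (fun z hz => Equiv.swap_apply_of_ne_of_ne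
    (ne_of_mem_of_not_mem hz huv.1) (ne_of_mem_of_not_mem hz huv.2)) u
  exact hne (by simpa [swapIso] using this.symm)

theorem exists_isFixingSet_card_eq_fixingNumber {V : Type*} [Fintype V] (G : SimpleGraph V) :
    ∃ S : Finset V, S.card = fixingNumber G ∧ IsFixingSet G S :=
  Nat.sInf_mem (s := {n | ∃ S : Finset V, S.card = n ∧ IsFixingSet G ↑S})
    ⟨_, Finset.univ, rfl, fun _ h v => h v (Finset.mem_univ v)⟩

namespace SimpleGraph

variable {V : Type*} [Finite V] {G : SimpleGraph V} {i : ℕ}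

theorem IsTree.ncard_setOf_ecc_eq_diff_isEccLocalMax_le (hT : G.IsTree) :
    ({v | ecc G v = i} \ {v | IsEccLocalMax G v}).ncard ≤ {v | ecc G v = i + 1}.ncard := by
  refine Set.ncard_le_ncard_of_forall_subsingleton G.Adj (fun v ⟨hvi, hvM⟩ => ?_)
    (fun w hw => ?_) (Set.toFinite _)
  · obtain ⟨u, hu, hlt⟩ : ∃ u, G.Adj v u ∧ ecc G v < ecc G u := by
      simpa [IsEccLocalMax] using hvM
    have := hT.connected.ecc_le_ecc_add_one hu.symm
    exact ⟨u, by simp_all; omega, hu⟩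
  · refine (hT.subsingleton_setOf_adj_ecc_le w).anti
      fun v ⟨⟨hvi, _⟩, hvw⟩ => ⟨hvw.symm, ?_⟩
    simp_all

theorem IsTree.ncard_setOf_ecc_eq_inter_isEccLocalMax_diff_le (hT : G.IsTree)
    (hi : sInf (Set.range (ecc G)) < i) {S : Set V} (hS : IsFixingSet G S) :
    (({v | ecc G v = i} ∩ {v | IsEccLocalMax G v}) \ S).ncard ≤
      {v | ecc G v = i - 1}.ncard := by
  refine Set.ncard_le_ncard_of_forall_subsingleton G.Adj (fun v ⟨⟨hvi, hvM⟩, _⟩ => ?_)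
    (fun w _ => ?_) (Set.toFinite _)
  · have hr : sInf (Set.range (ecc G)) < ecc G v := hvi ▸ hi
    obtain ⟨w, hw⟩ :=
      hT.connected.preconnected.exists_adj_of_ecc_pos ((Nat.zero_le _).trans_lt hr)
    exact ⟨w, (hT.ecc_eq_sub_one_of_isEccLocalMax hvM hw hr).trans (by rw [hvi]), hw⟩
  · rintro v ⟨⟨⟨-, hvM⟩, hvS⟩, hvw⟩ v' ⟨⟨⟨-, hv'M⟩, hv'S⟩, hv'w⟩
    by_contra hne
    refine (hS.mem_or_mem_of_neighborSet_eq hne ?_).elim hvS hv'S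
    rw [hT.neighborSet_eq_singleton_of_isEccLocalMax hvM hvw,
      hT.neighborSet_eq_singleton_of_isEccLocalMax hv'M hv'w]

theorem IsTree.ncard_setOf_ecc_eq_le (hT : G.IsTree) (hi : sInf (Set.range (ecc G)) < i)
    {S : Set V} (hS : IsFixingSet G S) :
    {v | ecc G v = i}.ncard ≤
      S.ncard + {v | ecc G v = i - 1}.ncard + {v | ecc G v = i + 1}.ncard := by
  have := hT.ncard_setOf_ecc_eq_diff_isEccLocalMax_le (i := i)
  have := hT.ncard_setOf_ecc_eq_inter_isEccLocalMax_diff_le hi hS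
  set A := {v | ecc G v = i}
  set M := {v | IsEccLocalMax G v}
  have hA : A.ncard ≤ (A \ M).ncard + ((A ∩ M) \ S).ncard + S.ncard :=
    calc A.ncard ≤ (A \ M ∪ (A ∩ M) \ S ∪ S).ncard :=
          Set.ncard_le_ncard (fun v hv => by by_cases v ∈ M <;> by_cases v ∈ S <;> simp_all)
            (Set.toFinite _)
      _ ≤ _ := (Set.ncard_union_le _ _).trans (by gcongr; exact Set.ncard_union_le _ _)
  omega

end SimpleGraph

theorem fixingNumber_ge_of_eccentric_sequence_general
    {V : Type*} [Fintype V] (G : SimpleGraph V) (hT : G.IsTree) (i : ℕ)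
    (hri : sInf (Set.range (ecc G)) < i) :
    {v : V | ecc G v = i}.ncard - {v : V | ecc G v = i - 1}.ncard
        - {v : V | ecc G v = i + 1}.ncard ≤ fixingNumber G := by
  obtain ⟨S, hcard, hS⟩ := exists_isFixingSet_card_eq_fixingNumber G
  have := hT.ncard_setOf_ecc_eq_le hri hS
  rw [Set.ncard_coe_finset, hcard] at this
  omega

theorem fixingNumber_ge_of_eccentric_sequence
    {V : Type*} [Fintype V] (G : SimpleGraph V) (hT : G.IsTree) (i : ℕ)
    (hri : sInf (Set.range (ecc G)) < i) (hid : i ≤ sSup (Set.range (ecc G)))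
    (h : {v : V | ecc G v = i - 1}.ncard + {v : V | ecc G v = i + 1}.ncard
        < {v : V | ecc G v = i}.ncard) :
    {v : V | ecc G v = i}.ncard - {v : V | ecc G v = i - 1}.ncard
        - {v : V | ecc G v = i + 1}.ncard ≤ fixingNumber G :=
  fixingNumber_ge_of_eccentric_sequence_general G hT i hri
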